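/- Fix real k_s, k_m, k_ℓ with 𝛂 := k_s + k_ℓ − 1/2 > −1 and k_m ≥ 0; set 𝛃 = k_ℓ − 1/2. Let i ≥ 1 and (ξ_1,…,ξ_i,ξ_{i+1}) ∈ D_k(Θ_{i+1}). Define h(z) = Γ((z+ξ_1)/2) · Γ((z+𝛂−|𝛃|+1)/2)^{-1} · Γ(z) · Γ((z+ξ_i+2k_m)/2)^{-1} · ∏_{q=1}^{i−1} Γ((z+ξ_{q+1})/2) · Γ((z+ξ_q+2k_m)/2)^{-1}, and let S ⊂ ℂ be the set of z at which none of the Gamma arguments occurring in h is a nonpositive integer. Then there exists a nonzero complex number c such that h(z) → c as z → ξ_{i+1} within S. -/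

import Mathlib

noncomputable section

/-- The function `h(z)` of Lemma 4.4 of the paper (indices shifted to be 0-based:
`ξ j` here is `ξ_{j+1}` of the paper). -/
def hfun (α β km : ℝ) (i : ℕ) (ξ : ℕ → ℝ) (z : ℂ) : ℂ :=
  Complex.Gamma ((z + (ξ 0 : ℂ)) / 2) *
    (Complex.Gamma ((z + (α : ℂ) - ((|β| : ℝ) : ℂ) + 1) / 2))⁻¹ *
    Complex.Gamma z *
    (Complex.Gamma ((z + (ξ (i - 1) : ℂ) + 2 * (km : ℂ)) / 2))⁻¹ *
    ∏ q ∈ Finset.Icc 1 (i - 1),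
      Complex.Gamma ((z + (ξ q : ℂ)) / 2) *
        (Complex.Gamma ((z + (ξ (q - 1) : ℂ) + 2 * (km : ℂ)) / 2))⁻¹

/-- The set of `z` at which none of the Gamma arguments occurring in `hfun`
is a nonpositive integer. -/
def hGoodSet (α β km : ℝ) (i : ℕ) (ξ : ℕ → ℝ) : Set ℂ :=
  {z | ∀ n : ℕ,
    (z + (ξ 0 : ℂ)) / 2 ≠ -(n : ℂ) ∧
    (z + (α : ℂ) - ((|β| : ℝ) : ℂ) + 1) / 2 ≠ -(n : ℂ) ∧
    z ≠ -(n : ℂ) ∧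
    (z + (ξ (i - 1) : ℂ) + 2 * (km : ℂ)) / 2 ≠ -(n : ℂ) ∧
    ∀ q ∈ Finset.Icc 1 (i - 1),
      (z + (ξ q : ℂ)) / 2 ≠ -(n : ℂ) ∧
      (z + (ξ (q - 1) : ℂ) + 2 * (km : ℂ)) / 2 ≠ -(n : ℂ)}

/-!
Every quotient `Γ(w + n) / Γ(w)` with `n ∈ ℕ` is the Pochhammer polynomial
`w (w + 1) ⋯ (w + n - 1)`. This disposes of the first factor of `h` and of the factors of the
product: they extend continuously to `ξ_{i+1}`, and since `k_m ≥ 0` makes `ξ_1 ≤ ⋯ ≤ ξ_{i+1} < 0`,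
the numerator argument `w + n` is negative there, so no root `w = -j`, `j < n`, is hit.

What remains is `Γ(z) / Γ((z + ξ_{i+1}) / 2 - a)` with `a ∈ ℕ`. If `ξ_{i+1}` is not an integer,
both Gamma values are finite and nonzero. If `ξ_{i+1} = -P`, both Gamma functions have a simple
pole; moving both arguments up to `1` with the functional equation, the vanishing factors `z + P`
and `(z + P) / 2` cancel up to the factor `1 / 2`.
-/

open Filter Topology

section NonzeroLimits

variable {α M : Type*} [TopologicalSpace M] [CommMonoidWithZero M] [NoZeroDivisors M]
  [ContinuousMul M] {l : Filter α}

theorem exists_ne_zero_tendsto_mul {f g : α → M} (hf : ∃ c ≠ 0, Tendsto f l (𝓝 c))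
    (hg : ∃ c ≠ 0, Tendsto g l (𝓝 c)) : ∃ c ≠ 0, Tendsto (fun x => f x * g x) l (𝓝 c) := by
  obtain ⟨c, hc, hf⟩ := hf
  obtain ⟨d, hd, hg⟩ := hg
  exact ⟨c * d, mul_ne_zero hc hd, hf.mul hg⟩

theorem exists_ne_zero_tendsto_finset_prod [Nontrivial M] {ι : Type*} {s : Finset ι}
    {f : ι → α → M} (h : ∀ q ∈ s, ∃ c ≠ 0, Tendsto (f q) l (𝓝 c)) :
    ∃ c ≠ 0, Tendsto (fun x => ∏ q ∈ s, f q x) l (𝓝 c) := by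
  choose! c hc₀ hc using h
  exact ⟨∏ q ∈ s, c q, Finset.prod_ne_zero_iff.2 hc₀, tendsto_finsetProd s hc⟩

end NonzeroLimits

theorem ascPochhammer_eval_ne_zero_of_re_add_lt_one {s : ℂ} {n : ℕ} (hs : s.re + n < 1) :
    (ascPochhammer ℂ n).eval s ≠ 0 := by
  rw [Ne, ascPochhammer_eval_eq_zero_iff]
  rintro ⟨k, hk, hks⟩
  have hre : (k : ℝ) = -s.re := by simpa using congrArg Complex.re hks
  have : (k : ℝ) + 1 ≤ n := by exact_mod_cast hk
  linarith

namespace Complex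

/-- Unconditional: with the convention `Γ(-m) = 0` both sides vanish at the poles. -/
theorem inv_Gamma_eq_ascPochhammer_mul_inv_Gamma_add_nat (s : ℂ) (n : ℕ) :
    (Gamma s)⁻¹ = (ascPochhammer ℂ n).eval s * (Gamma (s + n))⁻¹ := by
  induction n with
  | zero => simp
  | succ n ih =>
    rw [ih, one_div_Gamma_eq_self_mul_one_div_Gamma_add_one (s + n), ascPochhammer_succ_eval,
      Nat.cast_succ, ← add_assoc, mul_assoc]

theorem tendsto_Gamma_mul_inv_Gamma_of_eq_add_nat {α : Type*} {l : Filter α} {f g : α → ℂ}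
    {s : ℂ} (n : ℕ) (hfg : ∀ x, f x = g x + n) (hg : Tendsto g l (𝓝 s))
    (hpoles : ∀ᶠ x in l, ∀ k : ℕ, g x ≠ -k) :
    Tendsto (fun x => Gamma (f x) * (Gamma (g x))⁻¹) l (𝓝 ((ascPochhammer ℂ n).eval s)) :=
  (((ascPochhammer ℂ n).continuous.tendsto s).comp hg).congr' <| hpoles.mono fun x hx => by
    simp only [Function.comp, hfg, ← div_eq_mul_inv, Gamma_add_nat_div_Gamma_eq _ hx]

theorem exists_ne_zero_tendsto_Gamma_mul_inv_Gamma_of_eq_add_nat {S : Set ℂ} {x : ℂ}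
    {f g : ℂ → ℂ} (n : ℕ) (hfg : ∀ z, f z = g z + n) (hg : ContinuousAt g x) (hfx : (f x).re < 1)
    (hS : ∀ z ∈ S, ∀ k : ℕ, g z ≠ -k) :
    ∃ c ≠ 0, Tendsto (fun z => Gamma (f z) * (Gamma (g z))⁻¹) (𝓝[S] x) (𝓝 c) :=
  ⟨_, ascPochhammer_eval_ne_zero_of_re_add_lt_one (by simpa [hfg] using hfx),
    tendsto_Gamma_mul_inv_Gamma_of_eq_add_nat n hfg hg.continuousWithinAt
      (eventually_nhdsWithin_of_forall hS)⟩

theorem Gamma_mul_inv_Gamma_half_sub_nat_eq (P a : ℕ) {z : ℂ} (hz : ∀ m : ℕ, z ≠ -m) :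
    Gamma z * (Gamma ((z - P) / 2 - a))⁻¹ =
      Gamma (z + (P + 1)) * (Gamma ((z + P) / 2 + 1))⁻¹ *
        (ascPochhammer ℂ (P + a)).eval ((z - P) / 2 - a) / (2 * (ascPochhammer ℂ P).eval z) := by
  have hzP : z + P ≠ 0 := fun h => hz P (by linear_combination h)
  have hPz : (ascPochhammer ℂ P).eval z ≠ 0 := by
    rw [Ne, ascPochhammer_eval_eq_zero_iff]
    rintro ⟨k, -, hk⟩
    exact hz k (by linear_combination hk)
  have hnum := Gamma_add_nat_div_Gamma_eq (n := P + 1) z hz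
  rw [div_eq_iff (Gamma_ne_zero hz), ascPochhammer_succ_eval] at hnum
  rw [inv_Gamma_eq_ascPochhammer_mul_inv_Gamma_add_nat _ (P + a + 1), ascPochhammer_succ_eval,
    show (z - P) / 2 - a + ((P + a + 1 : ℕ) : ℂ) = (z + P) / 2 + 1 by push_cast; ring,
    show (z - P) / 2 - a + ((P + a : ℕ) : ℂ) = (z + P) / 2 by push_cast; ring]
  push_cast at hnum
  rw [hnum]
  field_simp

theorem tendsto_Gamma_mul_inv_Gamma_half_sub_nat_nhdsWithin_neg_nat (P a : ℕ) :
    Tendsto (fun z => Gamma z * (Gamma ((z - P) / 2 - a))⁻¹)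
      (𝓝[{z | ∀ m : ℕ, z ≠ -m}] (-P : ℂ))
      (𝓝 ((ascPochhammer ℂ (P + a)).eval (-(P + a : ℂ)) /
        (2 * (ascPochhammer ℂ P).eval (-P : ℂ)))) := by
  have hPP : (ascPochhammer ℂ P).eval (-P : ℂ) ≠ 0 :=
    ascPochhammer_eval_ne_zero_of_re_add_lt_one (by simp)
  have hcont : ContinuousAt (fun z => Gamma (z + (P + 1)) * (Gamma ((z + P) / 2 + 1))⁻¹ *
      (ascPochhammer ℂ (P + a)).eval ((z - P) / 2 - a) / (2 * (ascPochhammer ℂ P).eval z))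
      (-P) := by
    have hΓ : ContinuousAt (fun z : ℂ => Gamma (z + (P + 1))) (-P) :=
      differentiableAt_Gamma_one.continuousAt.comp_of_eq (by fun_prop) (by ring)
    have hΓinv : Continuous fun z : ℂ => (Gamma ((z + P) / 2 + 1))⁻¹ :=
      differentiable_one_div_Gamma.continuous.comp (by fun_prop)
    have hpoly : Continuous fun z : ℂ => (ascPochhammer ℂ (P + a)).eval ((z - P) / 2 - a) :=
      (ascPochhammer ℂ (P + a)).continuous.comp (by fun_prop)
    exact ((hΓ.mul hΓinv.continuousAt).mul hpoly.continuousAt).div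
      (continuousAt_const.mul (ascPochhammer ℂ P).continuousAt) (mul_ne_zero two_ne_zero hPP)
  refine tendsto_nhdsWithin_congr (fun z hz => (Gamma_mul_inv_Gamma_half_sub_nat_eq P a hz).symm) ?_
  convert hcont.continuousWithinAt.tendsto using 2
  rw [show (-P : ℂ) + (P + 1) = 1 by ring, show ((-P : ℂ) + P) / 2 + 1 = 1 by ring,
    show ((-P : ℂ) - P) / 2 - a = -(P + a) by ring, Gamma_one, inv_one, one_mul, one_mul]

theorem exists_ne_zero_tendsto_Gamma_mul_inv_Gamma_half_sub_nat {x : ℝ} (hx : x < 0) (a : ℕ) :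
    ∃ c ≠ 0, Tendsto (fun z => Gamma z * (Gamma ((z + x) / 2 - a))⁻¹)
      (𝓝[{z | ∀ m : ℕ, z ≠ -m}] (x : ℂ)) (𝓝 c) := by
  by_cases hpole : ∃ P : ℕ, x = -P
  · obtain ⟨P, rfl⟩ := hpole
    refine ⟨_, ?_, by
      push_cast
      simpa only [← sub_eq_add_neg] using
        tendsto_Gamma_mul_inv_Gamma_half_sub_nat_nhdsWithin_neg_nat P a⟩
    exact div_ne_zero (ascPochhammer_eval_ne_zero_of_re_add_lt_one (by simp))
      (mul_ne_zero two_ne_zero (ascPochhammer_eval_ne_zero_of_re_add_lt_one (by simp)))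
  · rw [not_exists] at hpole
    have hx' : ∀ m : ℕ, (x : ℂ) ≠ -m := fun m h => hpole m (by exact_mod_cast h)
    have hxa : ∀ m : ℕ, ((x : ℂ) + x) / 2 - a ≠ -m := by
      intro m h
      have hr : x = a - m := by exact_mod_cast (by linear_combination h : (x : ℂ) = a - m)
      refine hpole (m - a) ?_
      rw [Nat.cast_sub (by exact_mod_cast (by linarith : (a : ℝ) ≤ m))]
      linarith
    refine ⟨_, mul_ne_zero (Gamma_ne_zero hx') (inv_ne_zero (Gamma_ne_zero hxa)), ?_⟩
    exact ((differentiableAt_Gamma _ hx').continuousAt.mul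
      (differentiable_one_div_Gamma.continuous.comp (by fun_prop)).continuousAt).continuousWithinAt

end Complex

theorem stmt13_general (km α β : ℝ) (hkm : 0 ≤ km)
    (i : ℕ) (hi : 1 ≤ i)
    (ξ : ℕ → ℝ)
    -- `(ξ_1, …, ξ_{i+1}) ∈ D_k(Θ_{i+1})`, written with 0-based indices:
    (hd1 : ∃ n : ℕ, ξ 0 + |β| - α - 1 = 2 * (n : ℝ))
    (hd2 : ξ i < 0)
    (hd3 : ∀ j : ℕ, j < i → ∃ n : ℕ, ξ (j + 1) - ξ j - 2 * km = 2 * (n : ℝ)) :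
    ∃ c : ℂ, c ≠ 0 ∧
      Filter.Tendsto (hfun α β km i ξ) (nhdsWithin ((ξ i : ℝ) : ℂ) (hGoodSet α β km i ξ))
        (nhds c) := by
  obtain ⟨a₀, ha₀⟩ := hd1
  choose! a ha using hd3
  have hstep (q : ℕ) (hq₁ : 1 ≤ q) (hqi : q ≤ i) :
      (ξ q : ℂ) = ξ (q - 1) + 2 * km + 2 * a (q - 1) := by
    have := ha (q - 1) (by omega)
    rw [Nat.sub_add_cancel hq₁] at this
    exact_mod_cast (by linarith : ξ q = ξ (q - 1) + 2 * km + 2 * a (q - 1))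
  have hle (q : ℕ) (hq : q ≤ i) : ξ q ≤ ξ i :=
    monotoneOn_of_le_add_one Set.ordConnected_Iic (fun j _ _ hj => by
      linarith [ha j (Set.mem_Iic.1 hj), (a j).cast_nonneg (α := ℝ)]) hq (Set.mem_Iic.2 le_rfl) hq
  have hfirst : ∃ c ≠ 0, Tendsto (fun z : ℂ => Complex.Gamma ((z + ξ 0) / 2) *
      (Complex.Gamma ((z + α - |β| + 1) / 2))⁻¹) (𝓝[hGoodSet α β km i ξ] (ξ i : ℂ)) (𝓝 c) := by
    have e : (ξ 0 : ℂ) = α - |β| + 1 + 2 * a₀ := by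
      exact_mod_cast (by linarith : ξ 0 = α - |β| + 1 + 2 * a₀)
    refine Complex.exists_ne_zero_tendsto_Gamma_mul_inv_Gamma_of_eq_add_nat a₀
      (fun z => by rw [e]; ring) (by fun_prop) ?_ fun z hz k => (hz k).2.1
    simp only [Complex.div_ofNat_re, Complex.add_re, Complex.ofReal_re]
    linarith [hle 0 i.zero_le]
  have hmiddle : ∃ c ≠ 0, Tendsto (fun z : ℂ => Complex.Gamma z *
      (Complex.Gamma ((z + ξ (i - 1) + 2 * km) / 2))⁻¹)
      (𝓝[hGoodSet α β km i ξ] (ξ i : ℂ)) (𝓝 c) := by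
    obtain ⟨c, hc, h⟩ :=
      Complex.exists_ne_zero_tendsto_Gamma_mul_inv_Gamma_half_sub_nat hd2 (a (i - 1))
    refine ⟨c, hc, (h.mono_left (nhdsWithin_mono _ fun z hz k => (hz k).2.2.1)).congr fun z => ?_⟩
    rw [show (z + ξ (i - 1) + 2 * km) / 2 = (z + ξ i) / 2 - a (i - 1) by
      linear_combination -hstep i hi le_rfl / 2]
  have hprod : ∃ c ≠ 0, Tendsto (fun z : ℂ => ∏ q ∈ Finset.Icc 1 (i - 1),
      Complex.Gamma ((z + ξ q) / 2) * (Complex.Gamma ((z + ξ (q - 1) + 2 * km) / 2))⁻¹)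
      (𝓝[hGoodSet α β km i ξ] (ξ i : ℂ)) (𝓝 c) := by
    refine exists_ne_zero_tendsto_finset_prod fun q hq => ?_
    obtain ⟨hq₁, hqi⟩ := Finset.mem_Icc.1 hq
    refine Complex.exists_ne_zero_tendsto_Gamma_mul_inv_Gamma_of_eq_add_nat (a (q - 1))
      (fun z => by rw [hstep q hq₁ (by omega)]; ring) (by fun_prop) ?_
      fun z hz k => ((hz k).2.2.2.2 q hq).2
    simp only [Complex.div_ofNat_re, Complex.add_re, Complex.ofReal_re]
    linarith [hle q (by omega)]
  obtain ⟨c, hc, h⟩ := exists_ne_zero_tendsto_mul (exists_ne_zero_tendsto_mul hfirst hmiddle) hprod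
  exact ⟨c, hc, h.congr fun z => by simp only [hfun]; ring⟩

theorem stmt13 (ks km kl α β : ℝ) (hα : α = ks + kl - 1 / 2) (hβ : β = kl - 1 / 2)
    (hα1 : -1 < α) (hkm : 0 ≤ km)
    (i : ℕ) (hi : 1 ≤ i)
    (ξ : ℕ → ℝ)
    -- `(ξ_1, …, ξ_{i+1}) ∈ D_k(Θ_{i+1})`, written with 0-based indices:
    (hd1 : ∃ n : ℕ, ξ 0 + |β| - α - 1 = 2 * (n : ℝ))
    (hd2 : ξ i < 0)
    (hd3 : ∀ j : ℕ, j < i → ∃ n : ℕ, ξ (j + 1) - ξ j - 2 * km = 2 * (n : ℝ)) :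
    ∃ c : ℂ, c ≠ 0 ∧
      Filter.Tendsto (hfun α β km i ξ) (nhdsWithin ((ξ i : ℝ) : ℂ) (hGoodSet α β km i ξ))
        (nhds c) :=
  stmt13_general km α β hkm i hi ξ hd1 hd2 hd3
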